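/- For every integer N ≥ 2, the minimum over all placements of two controllers at distinct positions a ≠ b in {1,…,N} of the total switch-to-controller delay ∑_{i=1}^{N} min(|i − a|, |i − b|) equals the minimum over integer split points t with 1 ≤ t ≤ N − 1 of ⌊t²/4⌋ + ⌊(N − t)²/4⌋. -/

import Mathlib

/-!
Let `a < b` and `t = ⌊(a + b) / 2⌋`. Every switch in `[1, t]` is at least as close to `a` as to `b`
and every switch in `[t + 1, N]` is at least as close to `b`, so a placement costs at least the
best one-controller cost of the two blocks `[1, t]` and `[t + 1, N]`. The one-controller cost of
`m` consecutive integers is `⌊m² / 4⌋`, attained at their median (peel off both endpoints, which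
contribute at least, and at the median exactly, `m - 1`). Conversely, placing the two controllers
at the medians of the blocks `[1, t]` and `[t + 1, N]` costs at most `⌊t² / 4⌋ + ⌊(N - t)² / 4⌋`.
-/

open Finset

section IntervalSums

variable {M : Type*} [AddCommMonoid M] (f : ℤ → M)

lemma sum_Icc_eq_add_add_sum_Icc_of_lt {p q : ℤ} (h : p < q) :
    ∑ i ∈ Icc p q, f i = f p + f q + ∑ i ∈ Icc (p + 1) (q - 1), f i := by
  have hIcc : Icc p q = insert p (insert q (Icc (p + 1) (q - 1))) := by
    ext i; simp only [mem_Icc, mem_insert]; omega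
  rw [hIcc, sum_insert (by simp only [mem_insert, mem_Icc]; omega),
    sum_insert (by simp only [mem_Icc]; omega), add_assoc]

lemma sum_Icc_eq_sum_Icc_add_sum_Icc {p t q : ℤ} (hpt : p ≤ t + 1) (htq : t ≤ q) :
    ∑ i ∈ Icc p q, f i = ∑ i ∈ Icc p t, f i + ∑ i ∈ Icc (t + 1) q, f i := by
  rw [← sum_union (disjoint_left.2 fun i hi hi' => by simp only [mem_Icc] at hi hi'; omega)]
  congr 1
  ext i; simp only [mem_Icc, mem_union]; omega

end IntervalSums

lemma sq_le_four_mul_sum_abs_sub_add_one (c : ℤ) (n : ℕ) :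
    ∀ p q : ℤ, q + 1 - p = n → (q + 1 - p) ^ 2 ≤ 4 * ∑ i ∈ Icc p q, |i - c| + 1 := by
  induction n using Nat.twoStepInduction with
  | zero =>
    intro p q h
    obtain rfl : q = p - 1 := by omega
    simp
  | one =>
    intro p q h
    obtain rfl : q = p := by omega
    simp [abs_nonneg]
  | more n ih _ =>
    intro p q h
    have hends : q - p ≤ |p - c| + |q - c| := by
      linarith [le_abs_self (q - c), neg_abs_le (p - c)]
    have hinner := ih (p + 1) (q - 1) (by push_cast at h ⊢; omega)
    rw [sum_Icc_eq_add_add_sum_Icc_of_lt _ (by omega)]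
    nlinarith

lemma four_mul_sum_abs_sub_midpoint_le_sq (n : ℕ) :
    ∀ p q : ℤ, q + 1 - p = n → 4 * ∑ i ∈ Icc p q, |i - (p + q) / 2| ≤ (q + 1 - p) ^ 2 := by
  induction n using Nat.twoStepInduction with
  | zero =>
    intro p q h
    obtain rfl : q = p - 1 := by omega
    simp
  | one =>
    intro p q h
    obtain rfl : q = p := by omega
    simp [← two_mul]
  | more n ih _ =>
    intro p q h
    have hends : |p - (p + q) / 2| + |q - (p + q) / 2| = q - p := by
      rw [abs_of_nonpos (by omega), abs_of_nonneg (by omega)]; ring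
    have hinner := ih (p + 1) (q - 1) (by push_cast at h ⊢; omega)
    rw [show p + 1 + (q - 1) = p + q by ring] at hinner
    rw [sum_Icc_eq_add_add_sum_Icc_of_lt _ (by omega)]
    nlinarith

theorem sq_div_four_le_sum_abs_sub (c : ℤ) {p q : ℤ} (h : p ≤ q + 1) :
    (q + 1 - p) ^ 2 / 4 ≤ ∑ i ∈ Icc p q, |i - c| := by
  have hbound := sq_le_four_mul_sum_abs_sub_add_one c (q + 1 - p).toNat p q (by omega)
  rw [← Int.lt_add_one_iff, Int.ediv_lt_iff_lt_mul (by norm_num)]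
  linarith

theorem sum_abs_sub_midpoint_le_sq_div_four {p q : ℤ} (h : p ≤ q + 1) :
    ∑ i ∈ Icc p q, |i - (p + q) / 2| ≤ (q + 1 - p) ^ 2 / 4 := by
  have hbound := four_mul_sum_abs_sub_midpoint_le_sq (q + 1 - p).toNat p q (by omega)
  rw [Int.le_ediv_iff_mul_le (by norm_num)]
  linarith

lemma min_abs_sub_eq_left {a b i : ℤ} (hab : a ≤ b) (hi : i ≤ (a + b) / 2) :
    min |i - a| |i - b| = |i - a| :=
  min_eq_left (by grind)

lemma min_abs_sub_eq_right {a b i : ℤ} (hab : a ≤ b) (hi : (a + b) / 2 < i) :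
    min |i - a| |i - b| = |i - b| :=
  min_eq_right (by grind)

theorem split_cost_le_sum_min_abs_sub {N a b : ℤ} (ha : 1 ≤ a) (hab : a ≤ b) (hb : b ≤ N) :
    ((a + b) / 2) ^ 2 / 4 + (N - (a + b) / 2) ^ 2 / 4 ≤
      ∑ i ∈ Icc 1 N, min |i - a| |i - b| := by
  set t := (a + b) / 2
  have hleft : ∑ i ∈ Icc 1 t, min |i - a| |i - b| = ∑ i ∈ Icc 1 t, |i - a| :=
    sum_congr rfl fun i hi => min_abs_sub_eq_left hab (mem_Icc.1 hi).2
  have hright : ∑ i ∈ Icc (t + 1) N, min |i - a| |i - b| = ∑ i ∈ Icc (t + 1) N, |i - b| :=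
    sum_congr rfl fun i hi => min_abs_sub_eq_right hab (Int.lt_of_add_one_le (mem_Icc.1 hi).1)
  rw [sum_Icc_eq_sum_Icc_add_sum_Icc _ (t := t) (by omega) (by omega), hleft, hright]
  have hl := sq_div_four_le_sum_abs_sub a (p := 1) (q := t) (by omega)
  have hr := sq_div_four_le_sum_abs_sub b (p := t + 1) (q := N) (by omega)
  rw [add_sub_cancel_right] at hl
  rw [add_sub_add_right_eq_sub] at hr
  exact add_le_add hl hr

theorem sum_min_abs_sub_le_split_cost {N t : ℤ} (ht : 0 ≤ t) (htN : t ≤ N) :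
    ∑ i ∈ Icc 1 N, min |i - (1 + t) / 2| |i - (t + 1 + N) / 2| ≤
      t ^ 2 / 4 + (N - t) ^ 2 / 4 := by
  rw [sum_Icc_eq_sum_Icc_add_sum_Icc _ (by omega) htN]
  have hl := sum_abs_sub_midpoint_le_sq_div_four (p := 1) (q := t) (by omega)
  have hr := sum_abs_sub_midpoint_le_sq_div_four (p := t + 1) (q := N) (by omega)
  rw [add_sub_cancel_right] at hl
  rw [add_sub_add_right_eq_sub] at hr
  exact add_le_add ((sum_le_sum fun i _ => min_le_left _ _).trans hl)
    ((sum_le_sum fun i _ => min_le_right _ _).trans hr)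

theorem stmt4_general (N : ℤ) :
    sInf {s : ℤ | ∃ a b : ℤ, 1 ≤ a ∧ a ≤ N ∧ 1 ≤ b ∧ b ≤ N ∧ a ≠ b ∧
        s = ∑ i ∈ Finset.Icc (1 : ℤ) N, min |i - a| |i - b|} =
    sInf {s : ℤ | ∃ t : ℤ, 1 ≤ t ∧ t ≤ N - 1 ∧
        s = t ^ 2 / 4 + (N - t) ^ 2 / 4} := by
  apply csInf_eq_csInf_of_forall_exists_le
  · rintro _ ⟨a, b, ha, haN, hb, hbN, hab, rfl⟩
    wlog hlt : a < b generalizing a b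
    · simpa only [min_comm] using this b a hb hbN ha haN hab.symm (by omega)
    exact ⟨_, ⟨(a + b) / 2, by omega, by omega, rfl⟩,
      split_cost_le_sum_min_abs_sub ha hlt.le hbN⟩
  · rintro _ ⟨t, ht, htN, rfl⟩
    exact ⟨_, ⟨(1 + t) / 2, (t + 1 + N) / 2, by omega, by omega, by omega, by omega, by omega, rfl⟩,
      sum_min_abs_sub_le_split_cost (by omega) (by omega)⟩

/-- For every integer `N ≥ 2`, the minimum over all placements of two
controllers at distinct positions `a ≠ b` in `{1,…,N}` of the total
switch-to-controller delay `∑_{i=1}^{N} min |i − a| |i − b|` equals the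
minimum over split points `t` with `1 ≤ t ≤ N − 1` of
`⌊t²/4⌋ + ⌊(N − t)²/4⌋`. -/
theorem stmt4 (N : ℤ) (hN : 2 ≤ N) :
    sInf {s : ℤ | ∃ a b : ℤ, 1 ≤ a ∧ a ≤ N ∧ 1 ≤ b ∧ b ≤ N ∧ a ≠ b ∧
        s = ∑ i ∈ Finset.Icc (1 : ℤ) N, min |i - a| |i - b|} =
    sInf {s : ℤ | ∃ t : ℤ, 1 ≤ t ∧ t ≤ N - 1 ∧
        s = t ^ 2 / 4 + (N - t) ^ 2 / 4} :=
  stmt4_general N
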